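/- Let ν > 2 and λ > 2 be real numbers. A pair (x, α) ∈ ℝ² satisfies the deformation system α(λ-4) = -α(2 + 2νx - ν) - 8(1-x) and λ - 1 = -5 - 2νx + ν + 4x + ((2-λ)/2)α if and only if there exists s ∈ {1, -1} such that x = 1/2 - (νλ + s·√(2λν(ν+λ-2)))/(2ν(ν-2)) and α = -2(2ν - s·√(2λν(ν+λ-2)))/(ν(λ-2)). -/

import Mathlib

/-!
The second equation is linear in `α`, so for `λ ≠ 2` it expresses `α` as an affine function of `x`.
Substituting into the first equation leaves a quadratic in `x`, which after completing the square reads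
`(ν (ν - 2 - λ) - 2ν (ν - 2) x)² = 2λν (ν + λ - 2)`. For `ν, λ > 2` the right side is positive, so the
quadratic has the two roots `ν (ν - 2 - λ) - 2ν (ν - 2) x = ±√(2λν (ν + λ - 2))`, and solving back for
`x` and `α` gives the stated formulas.
-/

theorem exists_sign_mul_sqrt_eq_iff_sq_eq {E D : ℝ} (hD : 0 ≤ D) :
    (∃ s : ℝ, (s = 1 ∨ s = -1) ∧ E = s * √D) ↔ E ^ 2 = D := by
  constructor
  · rintro ⟨s, rfl | rfl, rfl⟩ <;> simp [hD]
  · intro h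
    rcases sq_eq_sq_iff_eq_or_eq_neg.mp (h.trans (Real.sq_sqrt hD).symm) with h | h
    · exact ⟨1, Or.inl rfl, by rw [h, one_mul]⟩
    · exact ⟨-1, Or.inr rfl, by rw [h, neg_one_mul]⟩

namespace DeformationSystem

variable {ν lam x α : ℝ}

theorem iff_affine_and_sq_eq (hν : ν ≠ 0) (hν2 : ν ≠ 2) (hlam : lam ≠ 2) :
    (α * (lam - 4) = -α * (2 + 2 * ν * x - ν) - 8 * (1 - x) ∧
      lam - 1 = -5 - 2 * ν * x + ν + 4 * x + ((2 - lam) / 2) * α) ↔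
    α = -2 * (lam + 4 - ν + 2 * (ν - 2) * x) / (lam - 2) ∧
      (ν * (ν - 2 - lam) - 2 * ν * (ν - 2) * x) ^ 2 = 2 * lam * ν * (ν + lam - 2) := by
  have hlam' : lam - 2 ≠ 0 := sub_ne_zero.mpr hlam
  have hν2' : ν - 2 ≠ 0 := sub_ne_zero.mpr hν2
  have second_iff : lam - 1 = -5 - 2 * ν * x + ν + 4 * x + ((2 - lam) / 2) * α ↔
      α = -2 * (lam + 4 - ν + 2 * (ν - 2) * x) / (lam - 2) := by
    rw [eq_div_iff hlam']
    constructor <;> intro h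
    · linear_combination 2 * h
    · linear_combination h / 2
  rw [and_comm, second_iff, and_congr_right_iff]
  rintro rfl
  -- cleared of `λ - 2`, the first equation is `-2 / (ν (ν - 2))` times the quadratic
  constructor <;> intro h
  · field_simp at h
    linear_combination (-(ν * (ν - 2)) / 2) * h
  · field_simp
    apply mul_left_cancel₀ (mul_ne_zero hν hν2')
    linear_combination (-2) * h

theorem explicit_iff_affine_and_eq (hν : ν ≠ 0) (hν2 : ν ≠ 2) (hlam : lam ≠ 2) (s Q : ℝ) :
    (x = 1 / 2 - (ν * lam + s * Q) / (2 * ν * (ν - 2)) ∧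
      α = -2 * (2 * ν - s * Q) / (ν * (lam - 2))) ↔
    α = -2 * (lam + 4 - ν + 2 * (ν - 2) * x) / (lam - 2) ∧
      ν * (ν - 2 - lam) - 2 * ν * (ν - 2) * x = s * Q := by
  have hν2' : ν - 2 ≠ 0 := sub_ne_zero.mpr hν2
  have hlam' : lam - 2 ≠ 0 := sub_ne_zero.mpr hlam
  have x_iff : x = 1 / 2 - (ν * lam + s * Q) / (2 * ν * (ν - 2)) ↔
      ν * (ν - 2 - lam) - 2 * ν * (ν - 2) * x = s * Q := by
    constructor <;> intro h
    · rw [h]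
      field_simp
      ring
    · field_simp
      linear_combination -h
  rw [x_iff, and_comm, and_congr_left_iff]
  intro hE
  suffices -2 * (2 * ν - s * Q) / (ν * (lam - 2)) =
      -2 * (lam + 4 - ν + 2 * (ν - 2) * x) / (lam - 2) by rw [this]
  field_simp
  linear_combination -hE

end DeformationSystem

theorem deformation_system_solution (ν lam x α : ℝ) (hν : 2 < ν) (hlam : 2 < lam) :
    (α * (lam - 4) = -α * (2 + 2 * ν * x - ν) - 8 * (1 - x) ∧
      lam - 1 = -5 - 2 * ν * x + ν + 4 * x + ((2 - lam) / 2) * α) ↔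
    ∃ s : ℝ, (s = 1 ∨ s = -1) ∧
      x = 1 / 2 - (ν * lam + s * Real.sqrt (2 * lam * ν * (ν + lam - 2))) / (2 * ν * (ν - 2)) ∧
      α = -2 * (2 * ν - s * Real.sqrt (2 * lam * ν * (ν + lam - 2))) / (ν * (lam - 2)) := by
  have hν0 : ν ≠ 0 := by positivity
  have hD : 0 ≤ 2 * lam * ν * (ν + lam - 2) := by
    have : 0 < ν + lam - 2 := by linarith
    positivity
  rw [DeformationSystem.iff_affine_and_sq_eq hν0 hν.ne' hlam.ne',
    ← exists_sign_mul_sqrt_eq_iff_sq_eq hD]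
  simp only [DeformationSystem.explicit_iff_affine_and_eq hν0 hν.ne' hlam.ne']
  exact ⟨fun ⟨hα, s, hs, hE⟩ ↦ ⟨s, hs, hα, hE⟩, fun ⟨s, hs, hα, hE⟩ ↦ ⟨hα, s, hs, hE⟩⟩
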